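/- arXiv:1812.10867 — 2 statements merged into one kernel-verified Lean document; each statement's English description precedes it below -/
import Mathlib

section
/- For any fixed b ∈ M_+(n,m), the ray Scal(b) = {λ b : λ > 0} is a totally geodesic subspace of M_+(n,m) with the metric ⟨u,v⟩_a = tr(u(a^Ta)^{-1}v^T)√det(a^Ta): every geodesic with initial point λ₀ b and initial velocity c b stays in Scal(b) (as long as it exists), being given explicitly by a(t) = λ₀ (1 + c m t/(2λ₀))^{2/m} b. -/
/-!
Along the ray the Gram matrix only rescales, `(λb)ᵀ(λb) = λ² bᵀb`, and `b (bᵀb)⁻¹ bᵀ` is the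
orthogonal projection onto the column space of `b`, which fixes `b` and has trace `m`. Hence
`geoRHS (λ b) (μ b) = (1 - m/2) μ²/λ • b`, so a curve `λ(t) b` is a geodesic exactly when
`λ'' = (1 - m/2) λ'²/λ`. The powers `λ₀ (1 + k t)^p` of affine functions satisfy
`λ'' = (1 - 1/p) λ'²/λ`, and `p = 2/m` matches the two coefficients; `k = c m/(2λ₀)` fixes
`λ'(0) = c`.
-/

open Matrix

attribute [local instance] Matrix.frobeniusNormedAddCommGroup Matrix.frobeniusNormedSpace

noncomputable section

/-- Moore-Penrose pseudoinverse of a full-rank `n × m` matrix. -/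
def aplus {n m : ℕ} (a : Matrix (Fin n) (Fin m) ℝ) : Matrix (Fin m) (Fin n) ℝ :=
  (aᵀ * a)⁻¹ * aᵀ

/-- Right-hand side of the geodesic equation `a_tt = geoRHS (a, a_t)` of the
metric `⟨u,v⟩_a = tr(u (aᵀa)⁻¹ vᵀ)√det(aᵀa)` on full-rank `n × m` matrices. -/
def geoRHS {n m : ℕ} (x v : Matrix (Fin n) (Fin m) ℝ) : Matrix (Fin n) (Fin m) ℝ :=
  v * (xᵀ * x)⁻¹ * vᵀ * x + v * (xᵀ * x)⁻¹ * xᵀ * v - x * (xᵀ * x)⁻¹ * vᵀ * v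
    + ((1 / 2) * Matrix.trace (v * (xᵀ * x)⁻¹ * vᵀ)) • x
    - (Matrix.trace (v * (xᵀ * x)⁻¹ * xᵀ)) • v

open Filter Topology

theorem Matrix.isUnit_det_of_rank_eq_card {K ι : Type*} [Field K] [Fintype ι] [DecidableEq ι]
    {A : Matrix ι ι K} (h : A.rank = Fintype.card ι) : IsUnit A.det := by
  rw [← Matrix.isUnit_iff_isUnit_det, ← Matrix.mulVec_surjective_iff_isUnit,
    ← Matrix.coe_mulVecLin, ← LinearMap.range_eq_top]
  apply Submodule.eq_top_of_finrank_eq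
  rw [← Matrix.rank, h, Module.finrank_fintype_fun_eq_card]

theorem geoRHS_smul_smul {n m : ℕ} {b : Matrix (Fin n) (Fin m) ℝ} (hb : IsUnit (bᵀ * b).det)
    {l : ℝ} (hl : l ≠ 0) (μ : ℝ) :
    geoRHS (l • b) (μ • b) = ((1 - (m : ℝ) / 2) * μ ^ 2 / l) • b := by
  have hinv : ((l • b)ᵀ * (l • b))⁻¹ = (l ^ 2)⁻¹ • (bᵀ * b)⁻¹ := by
    have : Invertible (l ^ 2) := invertibleOfNonzero (pow_ne_zero 2 hl)
    rw [transpose_smul, Matrix.smul_mul, Matrix.mul_smul, smul_smul, ← sq, Matrix.inv_smul _ _ hb,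
      invOf_eq_inv]
  have hproj : b * (bᵀ * b)⁻¹ * bᵀ * b = b := by
    rw [Matrix.mul_assoc, Matrix.mul_assoc, Matrix.nonsing_inv_mul _ hb, Matrix.mul_one]
  have htrace : trace (b * (bᵀ * b)⁻¹ * bᵀ) = m := by
    rw [Matrix.trace_mul_cycle, Matrix.mul_nonsing_inv _ hb, Matrix.trace_one, Fintype.card_fin]
  rw [geoRHS, hinv]
  simp only [transpose_smul, Matrix.smul_mul, Matrix.mul_smul, smul_smul, hproj,
    htrace, Matrix.trace_smul, smul_eq_mul, ← add_smul, ← sub_smul]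
  congr 1
  field_simp
  ring

theorem hasDerivAt_deriv_smul_const_of_ode {n m : ℕ} {b : Matrix (Fin n) (Fin m) ℝ}
    (hb : IsUnit (bᵀ * b).det) {lam : ℝ → ℝ} {t : ℝ} (hlam : lam t ≠ 0)
    (hdiff : ∀ᶠ s in 𝓝 t, DifferentiableAt ℝ lam s)
    (hode : HasDerivAt (deriv lam) ((1 - (m : ℝ) / 2) * deriv lam t ^ 2 / lam t) t) :
    HasDerivAt (deriv fun s => lam s • b)
      (geoRHS (lam t • b) (deriv (fun s => lam s • b) t)) t := by
  have hderiv : (fun s => deriv lam s • b) =ᶠ[𝓝 t] deriv fun s => lam s • b :=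
    hdiff.mono fun s hs => (deriv_smul_const hs b).symm
  rw [← hderiv.eq_of_nhds, geoRHS_smul_smul hb hlam]
  exact (hode.smul_const b).congr_of_eventuallyEq hderiv.symm

theorem eventually_pos_one_add_mul {k t : ℝ} (ht : 0 < 1 + k * t) :
    ∀ᶠ s in 𝓝 t, 0 < 1 + k * s :=
  ((continuous_const.add (continuous_const.mul continuous_id)).tendsto t).eventually
    (lt_mem_nhds ht)

theorem hasDerivAt_const_mul_one_add_mul_rpow (lam0 k p : ℝ) {t : ℝ} (ht : 0 < 1 + k * t) :
    HasDerivAt (fun s => lam0 * (1 + k * s) ^ p) (lam0 * p * k * (1 + k * t) ^ (p - 1)) t := by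
  have hlin : HasDerivAt (fun s => 1 + k * s) k t := by
    simpa using ((hasDerivAt_id t).const_mul k).const_add 1
  exact ((hlin.rpow_const (Or.inl ht.ne')).const_mul lam0).congr_deriv (by ring)

theorem hasDerivAt_deriv_const_mul_one_add_mul_rpow (lam0 : ℝ) {k p t : ℝ}
    (hp : p ≠ 0) (ht : 0 < 1 + k * t) :
    HasDerivAt (deriv fun s => lam0 * (1 + k * s) ^ p)
      ((1 - p⁻¹) * deriv (fun s => lam0 * (1 + k * s) ^ p) t ^ 2 / (lam0 * (1 + k * t) ^ p))
      t := by
  have hderiv : (fun s => lam0 * p * k * (1 + k * s) ^ (p - 1)) =ᶠ[𝓝 t]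
      deriv fun s => lam0 * (1 + k * s) ^ p :=
    (eventually_pos_one_add_mul ht).mono fun s hs =>
      (hasDerivAt_const_mul_one_add_mul_rpow lam0 k p hs).deriv.symm
  rw [← hderiv.eq_of_nhds]
  refine (hasDerivAt_const_mul_one_add_mul_rpow (lam0 * p * k) k (p - 1) ht).congr_of_eventuallyEq
    hderiv.symm |>.congr_deriv ?_
  have hx : 1 + k * t ≠ 0 := ht.ne'
  have hxp : (1 + k * t) ^ p ≠ 0 := (Real.rpow_pos_of_pos ht p).ne'
  simp only [Real.rpow_sub_one hx]
  field_simp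

theorem stmt_12_general {n m : ℕ} (hm : 0 < m)
    (b : Matrix (Fin n) (Fin m) ℝ) (hb : b.rank = m)
    (lam0 c : ℝ) (hlam0 : 0 < lam0)
    (A : ℝ → Matrix (Fin n) (Fin m) ℝ)
    (hA : ∀ t, A t = (lam0 * (1 + c * (m : ℝ) * t / (2 * lam0)) ^ ((2 : ℝ) / (m : ℝ))) • b) :
    A 0 = lam0 • b ∧ HasDerivAt A (c • b) 0 ∧
      ∀ t, 0 < 1 + c * (m : ℝ) * t / (2 * lam0) →
        HasDerivAt (deriv A) (geoRHS (A t) (deriv A t)) t ∧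
        ∃ lam : ℝ, 0 < lam ∧ A t = lam • b := by
  have hm0 : (m : ℝ) ≠ 0 := Nat.cast_ne_zero.mpr hm.ne'
  have hgram : IsUnit (bᵀ * b).det :=
    Matrix.isUnit_det_of_rank_eq_card (by rw [rank_transpose_mul_self, hb, Fintype.card_fin])
  set k := c * m / (2 * lam0)
  set lam : ℝ → ℝ := fun s => lam0 * (1 + k * s) ^ ((2 : ℝ) / m)
  have hA' : A = fun s => lam s • b := funext fun s => by simp only [hA, lam, k, div_mul_eq_mul_div]
  subst hA'
  refine ⟨by simp [lam], ?_, fun t ht => ?_⟩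
  · refine ((hasDerivAt_const_mul_one_add_mul_rpow lam0 k _ (by simp)).smul_const b).congr_deriv ?_
    rw [mul_zero, add_zero, Real.one_rpow, mul_one]
    congr 1
    simp only [k]
    field_simp
  · rw [← div_mul_eq_mul_div] at ht
    have hlam : 0 < lam t := mul_pos hlam0 (Real.rpow_pos_of_pos ht _)
    have hdiff : ∀ᶠ s in 𝓝 t, DifferentiableAt ℝ lam s :=
      (eventually_pos_one_add_mul ht).mono fun s hs =>
        (hasDerivAt_const_mul_one_add_mul_rpow lam0 k _ hs).differentiableAt
    have hode := hasDerivAt_deriv_const_mul_one_add_mul_rpow lam0 (div_ne_zero two_ne_zero hm0) ht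
    rw [inv_div] at hode
    exact ⟨hasDerivAt_deriv_smul_const_of_ode hgram hlam.ne' hdiff hode, lam t, hlam, rfl⟩

/-- the ray `{λ b : λ > 0}` is totally geodesic: the geodesic
starting at `λ₀ b` with velocity `c b` is `a(t) = λ₀ (1 + c m t/(2λ₀))^{2/m} b`,
which stays a positive multiple of `b` as long as it exists. -/
theorem stmt_12 {n m : ℕ} (hmn : m ≤ n) (hm : 0 < m)
    (b : Matrix (Fin n) (Fin m) ℝ) (hb : b.rank = m)
    (lam0 c : ℝ) (hlam0 : 0 < lam0)
    (A : ℝ → Matrix (Fin n) (Fin m) ℝ)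
    (hA : ∀ t, A t = (lam0 * (1 + c * (m : ℝ) * t / (2 * lam0)) ^ ((2 : ℝ) / (m : ℝ))) • b) :
    A 0 = lam0 • b ∧ HasDerivAt A (c • b) 0 ∧
      ∀ t, 0 < 1 + c * (m : ℝ) * t / (2 * lam0) →
        HasDerivAt (deriv A) (geoRHS (A t) (deriv A t)) t ∧
        ∃ lam : ℝ, 0 < lam ∧ A t = lam • b :=
  stmt_12_general hm b hb lam0 c hlam0 A hA
end
end

section
/- Let g : ℝ → Sym_+(m) be defined by g(t) = a(t)^T a(t) where a(t) is a horizontal geodesic in M_+(n,m), i.e., a solves a'' = a' a^+ a' + (1/2) tr(a'(a^Ta)^{-1}(a')^T) a − tr(a' a^+) a' with a' a^+ symmetric. Then g satisfies the Ebin geodesic equation g'' = g' g^{-1} g' + (1/4) tr(g^{-1} g' g^{-1} g') g − (1/2) tr(g^{-1} g') g'. -/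
/-! Horizontality of `a'` means `a' = a g⁻¹ b` with `b = aᵀa'` symmetric, so `g' = 2b`.
Substituting this into the horizontal geodesic equation gives `a'ᵀa' = b g⁻¹ b` and
`aᵀa'' = b g⁻¹ b + ½ tr(g⁻¹ b g⁻¹ b) g − tr(g⁻¹ b) b`, and `g'' = a''ᵀa + 2 a'ᵀa' + aᵀa''`
is then exactly the Ebin equation. -/

open Matrix

attribute [local instance] Matrix.frobeniusNormedAddCommGroup Matrix.frobeniusNormedSpace

noncomputable section

section Calculus

variable {𝕜 : Type*} [NontriviallyNormedField 𝕜] [CompleteSpace 𝕜]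
  {l m n : Type*} [Fintype l] [Fintype m] [Fintype n] {t : 𝕜}

theorem HasDerivAt.matrix_mul {u : 𝕜 → Matrix l m 𝕜} {v : 𝕜 → Matrix m n 𝕜}
    {u' : Matrix l m 𝕜} {v' : Matrix m n 𝕜} (hu : HasDerivAt u u' t) (hv : HasDerivAt v v' t) :
    HasDerivAt (fun s => u s * v s) (u' * v t + u t * v') t := by
  rw [add_comm]
  exact (mulLinearMap 𝕜).toContinuousBilinearMap.hasDerivAt_of_bilinear (fun _ => hu) (fun _ => hv)

theorem HasDerivAt.matrix_transpose {u : 𝕜 → Matrix m n 𝕜} {u' : Matrix m n 𝕜}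
    (hu : HasDerivAt u u' t) : HasDerivAt (fun s => (u s)ᵀ) u'ᵀ t :=
  (transposeLinearEquiv m n 𝕜 𝕜).toLinearMap.toContinuousLinearMap.hasFDerivAt.comp_hasDerivAt t hu

end Calculus

theorem Matrix.isUnit_of_rank_eq_card {K m : Type*} [Field K] [Fintype m] [DecidableEq m]
    {M : Matrix m m K} (h : M.rank = Fintype.card m) : IsUnit M := by
  rw [← mulVec_surjective_iff_isUnit, ← coe_mulVecLin, ← LinearMap.range_eq_top]
  apply Submodule.eq_top_of_finrank_eq
  rwa [Module.finrank_fintype_fun_eq_card]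

section Horizontal

variable {m n : Type*} [Fintype m] [Fintype n] [DecidableEq m]

/- The right-hand sides of the horizontal geodesic equation `a'' = horizontalSpray a a'` on
`M₊(n,m)` and of the Ebin geodesic equation `g'' = ebinSpray g g'` on `Sym₊(m)`. -/
def horizontalSpray (A A' : Matrix n m ℝ) : Matrix n m ℝ :=
  A' * ((Aᵀ * A)⁻¹ * Aᵀ) * A'
    + ((1 / 2) * trace (A' * (Aᵀ * A)⁻¹ * A'ᵀ)) • A
    - (trace (A' * ((Aᵀ * A)⁻¹ * Aᵀ))) • A'

def ebinSpray (G G' : Matrix m m ℝ) : Matrix m m ℝ :=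
  G' * G⁻¹ * G'
    + ((1 / 4) * trace (G⁻¹ * G' * G⁻¹ * G')) • G
    - ((1 / 2) * trace (G⁻¹ * G')) • G'

variable {A A' : Matrix n m ℝ}

theorem isUnit_det_gram_of_rank_eq_card (h : A.rank = Fintype.card m) :
    IsUnit (Aᵀ * A).det :=
  (isUnit_iff_isUnit_det _).mp (isUnit_of_rank_eq_card (by rw [rank_transpose_mul_self, h]))

theorem transpose_mul_mul_gram_inv_mul {k : Type*} (hA : IsUnit (Aᵀ * A).det)
    (X : Matrix m k ℝ) : Aᵀ * (A * ((Aᵀ * A)⁻¹ * X)) = X := by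
  rw [← Matrix.mul_assoc, ← Matrix.mul_assoc, mul_nonsing_inv _ hA, Matrix.one_mul]

theorem transpose_gram_inv (A : Matrix n m ℝ) : ((Aᵀ * A)⁻¹)ᵀ = (Aᵀ * A)⁻¹ := by
  rw [transpose_nonsing_inv, transpose_mul, transpose_transpose]

theorem eq_mul_gram_inv_of_horizontal (hA : IsUnit (Aᵀ * A).det)
    (hhor : (A' * ((Aᵀ * A)⁻¹ * Aᵀ))ᵀ = A' * ((Aᵀ * A)⁻¹ * Aᵀ)) :
    A' = A * ((Aᵀ * A)⁻¹ * (A'ᵀ * A)) := by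
  calc A' = A' * ((Aᵀ * A)⁻¹ * Aᵀ) * A := by
        rw [Matrix.mul_assoc, Matrix.mul_assoc, nonsing_inv_mul _ hA, Matrix.mul_one]
    _ = A * ((Aᵀ * A)⁻¹ * (A'ᵀ * A)) := by
        rw [← hhor, transpose_mul, transpose_mul, transpose_transpose, transpose_gram_inv]
        simp only [Matrix.mul_assoc]

theorem transpose_mul_eq_of_horizontal (hA : IsUnit (Aᵀ * A).det)
    (hhor : (A' * ((Aᵀ * A)⁻¹ * Aᵀ))ᵀ = A' * ((Aᵀ * A)⁻¹ * Aᵀ)) :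
    A'ᵀ * A = Aᵀ * A' := by
  conv_rhs => rw [eq_mul_gram_inv_of_horizontal hA hhor]
  exact (transpose_mul_mul_gram_inv_mul hA _).symm

theorem transpose_mul_horizontalSpray (hA : IsUnit (Aᵀ * A).det) {B : Matrix m m ℝ}
    (hB : Bᵀ = B) :
    Aᵀ * horizontalSpray A (A * ((Aᵀ * A)⁻¹ * B)) =
      B * (Aᵀ * A)⁻¹ * B + ((1 / 2) * trace ((Aᵀ * A)⁻¹ * B * (Aᵀ * A)⁻¹ * B)) • (Aᵀ * A)
        - trace ((Aᵀ * A)⁻¹ * B) • B := by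
  have tr_sq : trace (A * ((Aᵀ * A)⁻¹ * B) * (Aᵀ * A)⁻¹ * (A * ((Aᵀ * A)⁻¹ * B))ᵀ)
      = trace ((Aᵀ * A)⁻¹ * B * (Aᵀ * A)⁻¹ * B) := by
    rw [transpose_mul, transpose_mul, hB, transpose_gram_inv, trace_mul_cycle]
    simp only [Matrix.mul_assoc, transpose_mul_mul_gram_inv_mul hA]
    rw [trace_mul_comm]
    simp only [Matrix.mul_assoc]
  have tr_lin : trace (A * ((Aᵀ * A)⁻¹ * B) * ((Aᵀ * A)⁻¹ * Aᵀ)) = trace ((Aᵀ * A)⁻¹ * B) := by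
    rw [trace_mul_comm]
    simp only [Matrix.mul_assoc, transpose_mul_mul_gram_inv_mul hA]
  rw [horizontalSpray, tr_sq, tr_lin]
  simp only [Matrix.mul_sub, Matrix.mul_add, Matrix.mul_smul, Matrix.mul_assoc,
    transpose_mul_mul_gram_inv_mul hA]

theorem gram_horizontalSpray (hA : IsUnit (Aᵀ * A).det)
    (hhor : (A' * ((Aᵀ * A)⁻¹ * Aᵀ))ᵀ = A' * ((Aᵀ * A)⁻¹ * Aᵀ)) :
    (horizontalSpray A A')ᵀ * A + A'ᵀ * A' + (A'ᵀ * A' + Aᵀ * horizontalSpray A A')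
      = ebinSpray (Aᵀ * A) (A'ᵀ * A + Aᵀ * A') := by
  have hsym := transpose_mul_eq_of_horizontal hA hhor
  have hB : (Aᵀ * A')ᵀ = Aᵀ * A' := by rw [transpose_mul, transpose_transpose, hsym]
  have hA' : A' = A * ((Aᵀ * A)⁻¹ * (Aᵀ * A')) := hsym ▸ eq_mul_gram_inv_of_horizontal hA hhor
  have hsq : A'ᵀ * A' = Aᵀ * A' * (Aᵀ * A)⁻¹ * (Aᵀ * A') := by
    nth_rewrite 2 [hA']
    rw [← Matrix.mul_assoc, ← Matrix.mul_assoc, hsym]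
  have hspray := transpose_mul_horizontalSpray hA hB
  rw [← hA'] at hspray
  rw [← transpose_transpose ((horizontalSpray A A')ᵀ * A), transpose_mul, transpose_transpose,
    hspray, hsq, hsym, ebinSpray]
  generalize Aᵀ * A' = B at hB ⊢
  simp only [transpose_sub, transpose_add, transpose_smul, transpose_mul, hB, transpose_gram_inv,
    transpose_transpose]
  simp only [Matrix.mul_add, Matrix.add_mul, trace_add, Matrix.mul_assoc]
  module

end Horizontal

theorem stmt_18_general {n m : ℕ}
    (a a' : ℝ → Matrix (Fin n) (Fin m) ℝ)
    (hrank : ∀ t, (a t).rank = m)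
    (hda : ∀ t, HasDerivAt a (a' t) t)
    (hhor : ∀ t, (a' t * aplus (a t))ᵀ = a' t * aplus (a t))
    (hgeo : ∀ t, HasDerivAt a'
      (a' t * aplus (a t) * a' t
        + ((1 / 2) * Matrix.trace (a' t * ((a t)ᵀ * a t)⁻¹ * (a' t)ᵀ)) • a t
        - (Matrix.trace (a' t * aplus (a t))) • a' t) t)
    (g g' : ℝ → Matrix (Fin m) (Fin m) ℝ)
    (hg : ∀ t, g t = (a t)ᵀ * a t)
    (hg' : ∀ t, g' t = (a' t)ᵀ * a t + (a t)ᵀ * a' t) :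
    (∀ t, HasDerivAt g (g' t) t) ∧
    (∀ t, HasDerivAt g'
      (g' t * (g t)⁻¹ * g' t
        + ((1 / 4) * Matrix.trace ((g t)⁻¹ * g' t * (g t)⁻¹ * g' t)) • g t
        - ((1 / 2) * Matrix.trace ((g t)⁻¹ * g' t)) • g' t) t) := by
  obtain rfl : g = fun s => (a s)ᵀ * a s := funext hg
  obtain rfl : g' = fun s => (a' s)ᵀ * a s + (a s)ᵀ * a' s := funext hg'
  refine ⟨fun t => (hda t).matrix_transpose.matrix_mul (hda t), fun t => ?_⟩
  have hA := isUnit_det_gram_of_rank_eq_card (by rw [hrank t, Fintype.card_fin])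
  show HasDerivAt _ (ebinSpray ((a t)ᵀ * a t) ((a' t)ᵀ * a t + (a t)ᵀ * a' t)) t
  rw [← gram_horizontalSpray hA (hhor t)]
  exact ((hgeo t).matrix_transpose.matrix_mul (hda t)).add
    ((hda t).matrix_transpose.matrix_mul (hgeo t))

/-- if `a` is a horizontal geodesic in `M₊(n,m)`, then
`g = aᵀa` solves the Ebin geodesic equation
`g'' = g' g⁻¹ g' + (1/4) tr(g⁻¹ g' g⁻¹ g') g − (1/2) tr(g⁻¹ g') g'`. -/
theorem stmt_18 {n m : ℕ} (hmn : m ≤ n)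
    (a a' : ℝ → Matrix (Fin n) (Fin m) ℝ)
    (hrank : ∀ t, (a t).rank = m)
    (hda : ∀ t, HasDerivAt a (a' t) t)
    (hhor : ∀ t, (a' t * aplus (a t))ᵀ = a' t * aplus (a t))
    (hgeo : ∀ t, HasDerivAt a'
      (a' t * aplus (a t) * a' t
        + ((1 / 2) * Matrix.trace (a' t * ((a t)ᵀ * a t)⁻¹ * (a' t)ᵀ)) • a t
        - (Matrix.trace (a' t * aplus (a t))) • a' t) t)
    (g g' : ℝ → Matrix (Fin m) (Fin m) ℝ)
    (hg : ∀ t, g t = (a t)ᵀ * a t)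
    (hg' : ∀ t, g' t = (a' t)ᵀ * a t + (a t)ᵀ * a' t) :
    (∀ t, HasDerivAt g (g' t) t) ∧
    (∀ t, HasDerivAt g'
      (g' t * (g t)⁻¹ * g' t
        + ((1 / 4) * Matrix.trace ((g t)⁻¹ * g' t * (g t)⁻¹ * g' t)) • g t
        - ((1 / 2) * Matrix.trace ((g t)⁻¹ * g' t)) • g' t) t) :=
  stmt_18_general a a' hrank hda hhor hgeo g g' hg hg'
end
end
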